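/- If C is a left ideal of the twisted skew group ring R = K[G,Θ,α], then the Euclidean dual of C equals the image of the right annihilator of C under the adjoint map: C^⊥ = {â : a ∈ Ann_r(C)}. -/

import Mathlib

/-!
The pairing `⟨c, â⟩` equals the identity coefficient `(c·a)(1)`, and more generally
`⟨ḡ·c, â⟩ = Θ(g)((c·a)(g⁻¹))·α(g,g⁻¹)`; the second identity reduces to the cocycle relation
for `(g, p, p⁻¹g⁻¹)` together with `α(h⁻¹,h) = α(h,h⁻¹)`. Hence `c·a = 0` exactly when `â` is
orthogonal to every `ḡ·c`, which lies in `C` when `C` is a left ideal. Since the adjoint map is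
a bijection, every `b ∈ C^⊥` is some `â`, and then `a ∈ Ann_r(C)`.
-/

open Finset

variable {K : Type*} {G : Type*}

/-- Multiplication of the twisted skew group ring `K[G,Θ,α]`:
`(Σ_g a_g ḡ)·(Σ_h b_h h̄) = Σ_{g,h} a_g·Θ(g)(b_h)·α(g,h)·(gh)‾`. -/
def tsMul [Field K] [Group G] [Fintype G] [DecidableEq G]
    (Θ : G →* RingAut K) (α : G → G → Kˣ) (a b : G → K) : G → K :=
  fun x => ∑ p : G × G, if p.1 * p.2 = x then a p.1 * Θ p.1 (b p.2) * (α p.1 p.2 : K) else 0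

/-- The identity element `1̄` of the twisted skew group ring. -/
def tsOne [Field K] [Group G] [DecidableEq G] : (G → K) := fun x => if x = 1 then 1 else 0

/-- The adjoint map `a ↦ â = Σ_g Θ(g⁻¹)(a_g)·α(g,g⁻¹)·(g⁻¹)‾`. -/
def tsAdj [Field K] [Group G] (Θ : G →* RingAut K) (α : G → G → Kˣ) (a : G → K) : G → K :=
  fun x => Θ x (a x⁻¹) * (α x⁻¹ x : K)

section Cocycle

variable {M : Type*} [Group G]

theorem cocycle_inv_mul_self [MulOneClass M] (α : G → G → M)
    (hnorm : ∀ g : G, α g 1 = 1 ∧ α 1 g = 1)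
    (hcoc : ∀ g₁ g₂ g₃ : G, α g₁ (g₂ * g₃) * α g₂ g₃ = α (g₁ * g₂) g₃ * α g₁ g₂)
    (g : G) : α g⁻¹ g = α g g⁻¹ := by
  simpa [(hnorm g).1, (hnorm g).2] using hcoc g g⁻¹ g

theorem cocycle_mul_inv_mul_self [CommMonoid M] (α : G → G → M)
    (hnorm : ∀ g : G, α g 1 = 1 ∧ α 1 g = 1)
    (hcoc : ∀ g₁ g₂ g₃ : G, α g₁ (g₂ * g₃) * α g₂ g₃ = α (g₁ * g₂) g₃ * α g₁ g₂)
    (g p : G) :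
    α p (p⁻¹ * g⁻¹) * α g g⁻¹ = α g p * α (p⁻¹ * g⁻¹) (g * p) := by
  have h := hcoc g p (p⁻¹ * g⁻¹)
  rw [mul_inv_cancel_left] at h
  rw [← mul_inv_rev, cocycle_inv_mul_self α hnorm hcoc, mul_inv_rev, mul_comm, h, mul_comm]

end Cocycle

section TwistedSkewGroupRing

variable [Field K] [Group G]

theorem apply_map_inv_apply (Θ : G →* RingAut K) (x : G) (z : K) :
    Θ x (Θ x⁻¹ z) = z := by
  rw [map_inv, RingAut.inv_apply, RingEquiv.apply_symm_apply]

theorem tsAdj_surjective (Θ : G →* RingAut K) (α : G → G → Kˣ) :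
    Function.Surjective (tsAdj Θ α) := by
  intro b
  refine ⟨fun y => Θ y (b y⁻¹ * ((α y y⁻¹ : Kˣ) : K)⁻¹), funext fun x => ?_⟩
  simp only [tsAdj, inv_inv, apply_map_inv_apply]
  rw [mul_assoc, inv_mul_cancel₀ (Units.ne_zero _), mul_one]

variable [Fintype G] [DecidableEq G] (Θ : G →* RingAut K) (α : G → G → Kˣ)

theorem tsMul_apply (a b : G → K) (x : G) :
    tsMul Θ α a b x = ∑ g : G, a g * Θ g (b (g⁻¹ * x)) * (α g (g⁻¹ * x) : K) := by
  rw [tsMul, Fintype.sum_prod_type]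
  refine Finset.sum_congr rfl fun g _ => ?_
  rw [Finset.sum_eq_single (g⁻¹ * x)]
  · simp
  · intro h _ hh
    rw [if_neg]
    rintro rfl
    exact hh (by group)
  · simp

theorem tsMul_single_one_apply (g : G) (c : G → K) (x : G) :
    tsMul Θ α (Pi.single g 1) c x = Θ g (c (g⁻¹ * x)) * (α g (g⁻¹ * x) : K) := by
  rw [tsMul_apply, Finset.sum_eq_single g]
  · simp
  · intro h _ hh
    simp [hh]
  · simp

variable (hnorm : ∀ g : G, α g 1 = 1 ∧ α 1 g = 1)
    (hcoc : ∀ g₁ g₂ g₃ : G, α g₁ (g₂ * g₃) * α g₂ g₃ = α (g₁ * g₂) g₃ * α g₁ g₂)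
include hnorm hcoc

theorem sum_mul_tsAdj (c a : G → K) :
    ∑ x : G, c x * tsAdj Θ α a x = tsMul Θ α c a 1 := by
  rw [tsMul_apply]
  refine Finset.sum_congr rfl fun g _ => ?_
  rw [tsAdj, mul_one, cocycle_inv_mul_self α hnorm hcoc]
  ring

theorem sum_tsMul_single_mul_tsAdj
    (hstab : ∀ g x y : G, Θ g ((α x y : K)) = (α x y : K)) (c a : G → K) (g : G) :
    ∑ x : G, tsMul Θ α (Pi.single g 1) c x * tsAdj Θ α a x
      = Θ g (tsMul Θ α c a g⁻¹) * (α g g⁻¹ : K) := by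
  simp only [tsMul_single_one_apply]
  simp only [tsMul_apply, map_sum, Finset.sum_mul]
  refine (Fintype.sum_equiv (Equiv.mulLeft g) _ _ fun p => ?_).symm
  simp only [Equiv.coe_mulLeft, map_mul, inv_mul_cancel_left, mul_inv_rev, hstab,
    RingAut.mul_apply, tsAdj]
  have hk : ((α p (p⁻¹ * g⁻¹) : Kˣ) : K) * ((α g g⁻¹ : Kˣ) : K)
      = ((α g p : Kˣ) : K) * ((α (p⁻¹ * g⁻¹) (g * p) : Kˣ) : K) := by
    exact_mod_cast congrArg Units.val (cocycle_mul_inv_mul_self α hnorm hcoc g p)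
  linear_combination (Θ g (c p) * Θ g (Θ p (a (p⁻¹ * g⁻¹)))) * hk

theorem tsMul_eq_zero_of_forall_sum_tsMul_single_mul_tsAdj_eq_zero
    (hstab : ∀ g x y : G, Θ g ((α x y : K)) = (α x y : K)) {c a : G → K}
    (h : ∀ g : G, ∑ x : G, tsMul Θ α (Pi.single g 1) c x * tsAdj Θ α a x = 0) :
    tsMul Θ α c a = 0 := by
  funext y
  have hy := h y⁻¹
  rw [sum_tsMul_single_mul_tsAdj Θ α hnorm hcoc hstab, inv_inv] at hy
  simpa [Units.ne_zero] using hy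

end TwistedSkewGroupRing

theorem stmt12_general [Field K] [Group G] [Fintype G] [DecidableEq G]
    (Θ : G →* RingAut K) (α : G → G → Kˣ)
    (hnorm : ∀ g : G, α g 1 = 1 ∧ α 1 g = 1)
    (hcoc : ∀ g₁ g₂ g₃ : G, α g₁ (g₂ * g₃) * α g₂ g₃ = α (g₁ * g₂) g₃ * α g₁ g₂)
    (hstab : ∀ g x y : G, Θ g ((α x y : K)) = (α x y : K))
    (C : Submodule K (G → K))
    (hC : ∀ r : G → K, ∀ c ∈ C, tsMul Θ α r c ∈ C) :
    {b : G → K | ∀ c ∈ C, ∑ g : G, c g * b g = 0} =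
      tsAdj Θ α '' {a : G → K | ∀ c ∈ C, tsMul Θ α c a = 0} := by
  ext b
  constructor
  · intro hb
    obtain ⟨a, rfl⟩ := tsAdj_surjective Θ α b
    exact ⟨a, fun c hc => tsMul_eq_zero_of_forall_sum_tsMul_single_mul_tsAdj_eq_zero Θ α
      hnorm hcoc hstab fun g => hb _ (hC _ c hc), rfl⟩
  · rintro ⟨a, ha, rfl⟩ c hc
    rw [sum_mul_tsAdj Θ α hnorm hcoc, ha c hc]
    rfl

/-- **MacWilliams-type duality.** If `C` is a left ideal of
`R = K[G,Θ,α]`, then the Euclidean dual of `C` equals the image of the right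
annihilator of `C` under the adjoint map: `C^⊥ = {â : a ∈ Ann_r(C)}`. -/
theorem stmt12 [Field K] [Fintype K] [Group G] [Fintype G] [DecidableEq G]
    (Θ : G →* RingAut K) (α : G → G → Kˣ)
    (hnorm : ∀ g : G, α g 1 = 1 ∧ α 1 g = 1)
    (hcoc : ∀ g₁ g₂ g₃ : G, α g₁ (g₂ * g₃) * α g₂ g₃ = α (g₁ * g₂) g₃ * α g₁ g₂)
    (hstab : ∀ g x y : G, Θ g ((α x y : K)) = (α x y : K))
    (C : Submodule K (G → K))
    (hC : ∀ r : G → K, ∀ c ∈ C, tsMul Θ α r c ∈ C) :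
    {b : G → K | ∀ c ∈ C, ∑ g : G, c g * b g = 0} =
      tsAdj Θ α '' {a : G → K | ∀ c ∈ C, tsMul Θ α c a = 0} :=
  stmt12_general Θ α hnorm hcoc hstab C hC
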